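/- Let n alternatives be processed in a fixed order, with earliest start times s : Fin n → ℝ, latest start times l : Fin n → ℝ, and durations d : Fin n → ℝ with d i ≥ 0 for all i. Define the greedy start times t by t 0 = s 0 and t (i+1) = max (s (i+1)) (t i + d i). Then there exists a schedule u : Fin n → ℝ with s i ≤ u i ≤ l i for all i and u i + d i ≤ u (i+1) for all i (a valid non-overlapping schedule respecting all start-time windows) if and only if t i ≤ l i for every i. (Hence Algorithm 3 detects a scheduling conflict for a given resource ordering exactly when the ordering admits no valid schedule.) -/

import Mathlib

/-! The greedy start times form a schedule that respects the earliest start times and never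
overlaps, and by induction along the order they lie below every other such schedule. So some
schedule fits into the windows exactly when the greedy one does. -/

namespace Reservation

variable {α : Type*} [LinearOrder α] [Add α] {n : ℕ}

def IsGreedyStart (s d t : Fin n → α) : Prop :=
  (∀ h : 0 < n, t ⟨0, h⟩ = s ⟨0, h⟩) ∧
    ∀ (i : ℕ) (h : i + 1 < n),
      t ⟨i + 1, h⟩ = max (s ⟨i + 1, h⟩)
        (t ⟨i, Nat.lt_of_succ_lt h⟩ + d ⟨i, Nat.lt_of_succ_lt h⟩)

def NoOverlap (d u : Fin n → α) : Prop :=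
  ∀ (i : ℕ) (h : i + 1 < n),
    u ⟨i, Nat.lt_of_succ_lt h⟩ + d ⟨i, Nat.lt_of_succ_lt h⟩ ≤ u ⟨i + 1, h⟩

namespace IsGreedyStart

variable {s d t : Fin n → α}

theorem start_le (ht : IsGreedyStart s d t) (i : Fin n) : s i ≤ t i := by
  obtain ⟨_ | k, hk⟩ := i
  · exact (ht.1 hk).ge
  · exact (ht.2 k hk).ge.trans' (le_max_left _ _)

theorem noOverlap (ht : IsGreedyStart s d t) : NoOverlap d t :=
  fun i h => (ht.2 i h).ge.trans' (le_max_right _ _)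

theorem le_of_noOverlap [AddRightMono α] (ht : IsGreedyStart s d t) {u : Fin n → α}
    (hsu : ∀ i, s i ≤ u i) (hu : NoOverlap d u) (i : Fin n) : t i ≤ u i := by
  obtain ⟨k, hk⟩ := i
  induction k with
  | zero => exact (ht.1 hk).le.trans (hsu _)
  | succ k ih =>
    rw [ht.2 k hk]
    exact max_le (hsu _) ((add_le_add_left (ih (Nat.lt_of_succ_lt hk)) _).trans (hu k hk))

end IsGreedyStart

end Reservation

open Reservation in
theorem greedy_schedule_feasibility_general (n : ℕ) (s l d : Fin n → ℝ)
    (t : Fin n → ℝ)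
    (ht0 : ∀ (h : 0 < n), t ⟨0, h⟩ = s ⟨0, h⟩)
    (htsucc : ∀ (i : ℕ) (h : i + 1 < n),
      t ⟨i + 1, h⟩ = max (s ⟨i + 1, h⟩)
        (t ⟨i, Nat.lt_of_succ_lt h⟩ + d ⟨i, Nat.lt_of_succ_lt h⟩)) :
    (∃ u : Fin n → ℝ, (∀ i, s i ≤ u i ∧ u i ≤ l i) ∧
      ∀ (i : ℕ) (h : i + 1 < n),
        u ⟨i, Nat.lt_of_succ_lt h⟩ + d ⟨i, Nat.lt_of_succ_lt h⟩ ≤ u ⟨i + 1, h⟩) ↔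
    (∀ i, t i ≤ l i) := by
  have ht : IsGreedyStart s d t := ⟨ht0, htsucc⟩
  constructor
  · rintro ⟨u, hwindow, hu⟩ i
    exact (ht.le_of_noOverlap (fun j => (hwindow j).1) hu i).trans (hwindow i).2
  · exact fun hl => ⟨t, fun i => ⟨ht.start_le i, hl i⟩, ht.noOverlap⟩

/-- A valid non-overlapping schedule respecting all start-time windows exists for a
given order iff every greedy start time meets its latest start time constraint. -/
theorem greedy_schedule_feasibility (n : ℕ) (s l d : Fin n → ℝ) (hd : ∀ i, 0 ≤ d i)
    (t : Fin n → ℝ)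
    (ht0 : ∀ (h : 0 < n), t ⟨0, h⟩ = s ⟨0, h⟩)
    (htsucc : ∀ (i : ℕ) (h : i + 1 < n),
      t ⟨i + 1, h⟩ = max (s ⟨i + 1, h⟩)
        (t ⟨i, Nat.lt_of_succ_lt h⟩ + d ⟨i, Nat.lt_of_succ_lt h⟩)) :
    (∃ u : Fin n → ℝ, (∀ i, s i ≤ u i ∧ u i ≤ l i) ∧
      ∀ (i : ℕ) (h : i + 1 < n),
        u ⟨i, Nat.lt_of_succ_lt h⟩ + d ⟨i, Nat.lt_of_succ_lt h⟩ ≤ u ⟨i + 1, h⟩) ↔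
    (∀ i, t i ≤ l i) :=
  greedy_schedule_feasibility_general n s l d t ht0 htsucc
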